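/- arXiv:2002.10764 — 4 statements merged into one kernel-verified Lean document; each statement's English description precedes it below -/
import Mathlib

section
/- Suppose in a round-robin allocation with R rounds, for every agent y later than agent x in the order and every round r ∈ {1,...,R−1}, the value to y of the item y receives in round r is at least the value to y of the item x receives in round r+1. Then V_y(B_y) ≥ V_y(B_x) − V_y(p¹_x), where p¹_x is the item x received in round 1. -/
theorem Fin.sum_le_head_add_sum_of_succ_le_castSucc {M : Type*} [AddCommMonoid M] [PartialOrder M]
    [IsOrderedAddMonoid M] {n : ℕ} (f g : Fin (n + 1) → M)
    (hfg : ∀ i : Fin n, f i.succ ≤ g i.castSucc) (hlast : 0 ≤ g (Fin.last n)) :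
    ∑ i, f i ≤ f 0 + ∑ i, g i := by
  rw [Fin.sum_univ_succ f, Fin.sum_univ_castSucc g]
  gcongr
  calc ∑ i : Fin n, f i.succ ≤ ∑ i : Fin n, g i.castSucc := Finset.sum_le_sum fun i _ => hfg i
    _ ≤ _ := le_add_of_nonneg_right hlast

/-- If for each round r ∈ {1,...,R−1} the value to agent y of her round-r item
is at least the value to y of the item x receives in round r+1, then
V_y(B_y) ≥ V_y(B_x) − V_y(p¹_x). -/
theorem round_robin_later_agent_EF1_bound
    {R : ℕ} {Item : Type}
    (V : Item → ℝ) (hV : ∀ p, 0 ≤ V p)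
    (hR : 0 < R)
    (px py : Fin R → Item)
    (h : ∀ (r : Fin R) (hr : r.val + 1 < R), V (py r) ≥ V (px ⟨r.val + 1, hr⟩)) :
    ∑ r, V (py r) ≥ (∑ r, V (px r)) - V (px ⟨0, hR⟩) := by
  obtain ⟨n, rfl⟩ := Nat.exists_eq_add_one_of_ne_zero hR.ne'
  have := Fin.sum_le_head_add_sum_of_succ_le_castSucc (V ∘ px) (V ∘ py)
    (fun i => h i.castSucc i.succ.isLt) (hV _)
  simp only [Function.comp_apply] at this
  exact sub_le_iff_le_add'.mpr this
end

section
/- Given m customers, n producers, and recommendation size k with k < n ≤ mk, if ℓ = ⌊mk/n⌋ copies of each of the n products are allocated to m customers such that each customer receives at most one copy of each product and at most k products in total, and the allocation process stops only when either all ℓn copies are allocated or some customer has no feasible product remaining, then every producer is allocated to at least one customer and at least n − k producers receive exactly ℓ allocations. -/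
/-!
Since `n ≤ m k`, the quota `ℓ = ⌊m k / n⌋` is at least `1`. In either stopping case there is a
set of at most `k` products — empty if all copies are allocated, the blocked customer's bundle
otherwise — outside of which every product has all `ℓ` copies allocated, while every product
inside it is allocated to that customer. Hence every product has positive exposure, and the
at least `n - k` products outside that set have exposure exactly `ℓ`.
-/

open Finset

theorem Finset.card_compl_le_card_filter {α : Type*} [Fintype α] [DecidableEq α]
    {s : Finset α} {P : α → Prop} [DecidablePred P] (h : ∀ a ∉ s, P a) :
    Fintype.card α - #s ≤ #(univ.filter P) := by
  rw [← card_compl]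
  exact card_le_card fun a ha => mem_filter.2 ⟨mem_univ a, h a (mem_compl.1 ha)⟩

theorem first_phase_producer_fairness_general
    {m n k ℓ : ℕ} (hk : k < n) (hn : n ≤ m * k) (hℓ : ℓ = m * k / n)
    (A : Fin m → Finset (Fin n))
    (hcard : ∀ u, (A u).card ≤ k)
    (hstop :
      (∀ p : Fin n, (Finset.univ.filter (fun u : Fin m => p ∈ A u)).card = ℓ) ∨
      (∃ u : Fin m, ∀ p : Fin n, p ∉ A u →
        (Finset.univ.filter (fun u' : Fin m => p ∈ A u')).card = ℓ)) :
    (∀ p : Fin n,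
      1 ≤ (Finset.univ.filter (fun u : Fin m => p ∈ A u)).card) ∧
    n - k ≤ (Finset.univ.filter (fun p : Fin n =>
      (Finset.univ.filter (fun u : Fin m => p ∈ A u)).card = ℓ)).card := by
  have hℓ_pos : 1 ≤ ℓ := hℓ ▸ (Nat.one_le_div_iff (by omega)).2 hn
  obtain ⟨s, hs_card, hs_allocated, hs_full⟩ : ∃ s : Finset (Fin n), #s ≤ k ∧
      (∀ p ∈ s, ∃ u, p ∈ A u) ∧ ∀ p ∉ s, #(univ.filter fun u => p ∈ A u) = ℓ := by
    rcases hstop with hall | ⟨u, hu⟩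
    · exact ⟨∅, by simp, by simp, fun p _ => hall p⟩
    · exact ⟨A u, hcard u, fun p hp => ⟨u, hp⟩, hu⟩
  refine ⟨fun p => ?_, ?_⟩
  · by_cases hp : p ∈ s
    · obtain ⟨u, hu⟩ := hs_allocated p hp
      exact card_pos.2 ⟨u, mem_filter.2 ⟨mem_univ u, hu⟩⟩
    · exact (hs_full p hp).symm ▸ hℓ_pos
  · calc n - k ≤ Fintype.card (Fin n) - #s := by rw [Fintype.card_fin]; omega
      _ ≤ _ := card_compl_le_card_filter hs_full

/-- First-phase producer fairness: allocating ℓ = ⌊mk/n⌋ copies of each product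
(at most one copy per customer, at most k products per customer), stopping only
when either all copies are allocated or some customer is blocked, gives every
producer nonzero exposure and gives at least n − k producers exactly ℓ. -/
theorem first_phase_producer_fairness
    {m n k ℓ : ℕ} (hk : k < n) (hn : n ≤ m * k) (hℓ : ℓ = m * k / n)
    (A : Fin m → Finset (Fin n))
    (hcard : ∀ u, (A u).card ≤ k)
    (hexp : ∀ p : Fin n,
      (Finset.univ.filter (fun u : Fin m => p ∈ A u)).card ≤ ℓ)
    (hstop :
      (∀ p : Fin n, (Finset.univ.filter (fun u : Fin m => p ∈ A u)).card = ℓ) ∨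
      (∃ u : Fin m, ∀ p : Fin n, p ∉ A u →
        (Finset.univ.filter (fun u' : Fin m => p ∈ A u')).card = ℓ)) :
    (∀ p : Fin n,
      1 ≤ (Finset.univ.filter (fun u : Fin m => p ∈ A u)).card) ∧
    n - k ≤ (Finset.univ.filter (fun p : Fin n =>
      (Finset.univ.filter (fun u : Fin m => p ∈ A u)).card = ℓ)).card :=
  first_phase_producer_fairness_general hk hn hℓ A hcard hstop
end

section
/- If an allocation A = (A_1,...,A_m) is EF1 (for every u, w there is an item j ∈ A_w with V_u(A_u) ≥ V_u(A_w) − V_u(j)), and a second allocation C = (C_1,...,C_m) satisfies V_u(C_u) ≥ V_u(C_w) for all u, w, then the combined allocation (A_1 ∪ C_1, ..., A_m ∪ C_m), where A_u and C_u are disjoint for each u, is EF1. -/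
open Finset

theorem Finset.sum_union_erase_of_mem_left {α β : Type*} [DecidableEq α] [AddCommGroup β]
    {s t : Finset α} {j : α} (hst : Disjoint s t) (hj : j ∈ s) (f : α → β) :
    ∑ x ∈ (s ∪ t).erase j, f x = ∑ x ∈ s, f x - f j + ∑ x ∈ t, f x := by
  rw [sum_erase_eq_sub (mem_union_left t hj), sum_union hst]
  abel

theorem union_allocation_EF1_general
    {m : ℕ} {Item : Type} [DecidableEq Item]
    (V : Fin m → Item → ℝ)
    (A C : Fin m → Finset Item)
    (hdisj : ∀ u, Disjoint (A u) (C u))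
    (hA : ∀ u w : Fin m, ∃ j ∈ A w,
      ∑ p ∈ A u, V u p ≥ (∑ p ∈ A w, V u p) - V u j)
    (hC : ∀ u w : Fin m, ∑ p ∈ C u, V u p ≥ ∑ p ∈ C w, V u p) :
    ∀ u w : Fin m, ∃ j ∈ A w ∪ C w,
      ∑ p ∈ A u ∪ C u, V u p ≥ ∑ p ∈ (A w ∪ C w).erase j, V u p := by
  intro u w
  obtain ⟨j, hj, hAuw⟩ := hA u w
  refine ⟨j, mem_union_left _ hj, ?_⟩
  rw [sum_union (hdisj u), sum_union_erase_of_mem_left (hdisj w) hj]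
  linarith [hC u w]

/-- If allocation A is EF1 and allocation C satisfies V_u(C_u) ≥ V_u(C_w) for
all u, w, then the disjoint union allocation (A_u ∪ C_u) is EF1. -/
theorem union_allocation_EF1
    {m : ℕ} {Item : Type} [DecidableEq Item]
    (V : Fin m → Item → ℝ) (hV : ∀ u p, 0 ≤ V u p)
    (A C : Fin m → Finset Item)
    (hdisj : ∀ u, Disjoint (A u) (C u))
    (hA : ∀ u w : Fin m, ∃ j ∈ A w,
      ∑ p ∈ A u, V u p ≥ (∑ p ∈ A w, V u p) - V u j)
    (hC : ∀ u w : Fin m, ∑ p ∈ C u, V u p ≥ ∑ p ∈ C w, V u p) :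
    ∀ u w : Fin m, ∃ j ∈ A w ∪ C w,
      ∑ p ∈ A u ∪ C u, V u p ≥ ∑ p ∈ (A w ∪ C w).erase j, V u p :=
  union_allocation_EF1_general V A C hdisj hA hC
end

section
/- Let allocation B be obtained by distributing ℓ = ⌊mk/n⌋ copies of each of n products among m customers (each customer at most one copy per product), terminating when total allocations reach T = ℓ·n. Then every product has exposure exactly ℓ, and hence every producer attains her maximin share ⌊mk/n⌋. -/
theorem Fintype.eq_of_forall_le_of_sum_eq_card_nsmul {ι M : Type*} [Fintype ι]
    [AddCommMonoid M] [PartialOrder M] [IsOrderedCancelAddMonoid M] {f : ι → M} {c : M}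
    (hle : ∀ i, f i ≤ c) (hsum : ∑ i, f i = Fintype.card ι • c) (i : ι) : f i = c := by
  rw [← Finset.card_univ, ← Finset.sum_const] at hsum
  exact (Finset.sum_eq_sum_iff_of_le fun j _ => hle j).1 hsum i (Finset.mem_univ i)

theorem full_allocation_gives_mms_general
    {m n k ℓ : ℕ} (hℓ : ℓ = m * k / n)
    (A : Fin m → Finset (Fin n))
    (hexp : ∀ p : Fin n,
      (Finset.univ.filter (fun u : Fin m => p ∈ A u)).card ≤ ℓ)
    (htotal : ∑ p : Fin n,
      (Finset.univ.filter (fun u : Fin m => p ∈ A u)).card = ℓ * n) :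
    ∀ p : Fin n,
      (Finset.univ.filter (fun u : Fin m => p ∈ A u)).card = ℓ ∧
      m * k / n ≤ (Finset.univ.filter (fun u : Fin m => p ∈ A u)).card := by
  intro p
  have hexact := Fintype.eq_of_forall_le_of_sum_eq_card_nsmul hexp
    (by rwa [Fintype.card_fin, smul_eq_mul, mul_comm]) p
  exact ⟨hexact, (hexact.trans hℓ).ge⟩

/-- If ℓ = ⌊mk/n⌋ copies of each of the n products are fully allocated (each
customer holding at most one copy per product, total allocations ℓ·n), then
every product has exposure exactly ℓ, hence attains its maximin share ⌊mk/n⌋. -/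
theorem full_allocation_gives_mms
    {m n k ℓ : ℕ} (hk : k < n) (hn : n ≤ m * k) (hℓ : ℓ = m * k / n)
    (A : Fin m → Finset (Fin n))
    (hexp : ∀ p : Fin n,
      (Finset.univ.filter (fun u : Fin m => p ∈ A u)).card ≤ ℓ)
    (htotal : ∑ p : Fin n,
      (Finset.univ.filter (fun u : Fin m => p ∈ A u)).card = ℓ * n) :
    ∀ p : Fin n,
      (Finset.univ.filter (fun u : Fin m => p ∈ A u)).card = ℓ ∧
      m * k / n ≤ (Finset.univ.filter (fun u : Fin m => p ∈ A u)).card :=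
  full_allocation_gives_mms_general hℓ A hexp htotal
end
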